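/- arXiv:1311.0551 — 4 statements merged into one kernel-verified Lean document; each statement's English description precedes it below -/
import Mathlib

section
/- For every b ∈ P one has G(P,q) · (Σ_{a ∈ P} q(a)⁻¹ · B(a,b)⁻¹) = |P| · q(b). Equivalently (Lemma 'formulaforqhat'), the element q̂ := (G(P,q)/|P|) · Σ_{a ∈ P} q(a)⁻¹ · a of the group algebra ℂ[P], under the Fourier transform that sends a ∈ P to the function φ ↦ φ(a)⁻¹ on characters of P, goes to the quadratic form transported to the character group via the isomorphism a ↦ B(·,a). -/
/-!
Substituting `a = c + d` in `G(P,q) · Σ_c q(c)⁻¹` gives `Σ_d q(d) Σ_c B(c,d)`, and by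
nondegeneracy the inner character sum vanishes unless `d = 0`; hence `G(P,q) · Σ_c q(c)⁻¹ = |P|`.
The theorem follows since `q(a)⁻¹ B(a,b)⁻¹ = q(b) q(a+b)⁻¹`.
-/

open Finset

namespace MetricGroup

variable {P : Type*} [AddCommGroup P] {q : P → ℂˣ} {B : P → P → ℂˣ}

theorem pairing_comm (hB : ∀ a b : P, B a b = q (a + b) * (q a)⁻¹ * (q b)⁻¹) (a b : P) :
    B a b = B b a := by
  rw [hB, hB, add_comm a b, mul_right_comm]

theorem pairing_zero_left (hmul₁ : ∀ a a' b : P, B (a + a') b = B a b * B a' b) (b : P) :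
    B 0 b = 1 := by
  simpa using hmul₁ 0 0 b

theorem quadratic_zero (hB : ∀ a b : P, B a b = q (a + b) * (q a)⁻¹ * (q b)⁻¹)
    (hmul₁ : ∀ a a' b : P, B (a + a') b = B a b * B a' b) : q 0 = 1 := by
  simpa [hB] using pairing_zero_left hmul₁ 0

theorem coe_quadratic_mul_pairing (hB : ∀ a b : P, B a b = q (a + b) * (q a)⁻¹ * (q b)⁻¹)
    (c d : P) : (q d : ℂ) * B c d = q (c + d) * (q c : ℂ)⁻¹ := by
  rw [hB]
  push_cast
  field_simp

theorem coe_inv_mul_pairing_inv (hB : ∀ a b : P, B a b = q (a + b) * (q a)⁻¹ * (q b)⁻¹)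
    (a b : P) : (((q a)⁻¹ * (B a b)⁻¹ : ℂˣ) : ℂ) = q b * (q (a + b) : ℂ)⁻¹ := by
  rw [hB]
  push_cast
  field_simp

def pairingChar (hmul₁ : ∀ a a' b : P, B (a + a') b = B a b * B a' b) (d : P) : AddChar P ℂ where
  toFun c := B c d
  map_zero_eq_one' := by simp [pairing_zero_left hmul₁]
  map_add_eq_mul' a a' := by simp [hmul₁]

theorem pairingChar_eq_zero_iff (hB : ∀ a b : P, B a b = q (a + b) * (q a)⁻¹ * (q b)⁻¹)
    (hmul₁ : ∀ a a' b : P, B (a + a') b = B a b * B a' b)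
    (hnd : ∀ a : P, a ≠ 0 → ∃ b : P, B a b ≠ 1) (d : P) :
    pairingChar hmul₁ d = 0 ↔ d = 0 := by
  constructor
  · intro htriv
    by_contra hd
    obtain ⟨b, hb⟩ := hnd d hd
    apply hb
    rw [pairing_comm hB]
    simpa [pairingChar] using DFunLike.congr_fun htriv b
  · rintro rfl
    ext c
    simp [pairingChar, pairing_comm hB c 0, pairing_zero_left hmul₁]

variable [Fintype P]

theorem sum_pairing (hB : ∀ a b : P, B a b = q (a + b) * (q a)⁻¹ * (q b)⁻¹)
    (hmul₁ : ∀ a a' b : P, B (a + a') b = B a b * B a' b)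
    (hnd : ∀ a : P, a ≠ 0 → ∃ b : P, B a b ≠ 1) (d : P) [Decidable (d = 0)] :
    ∑ c : P, (B c d : ℂ) = if d = 0 then (Fintype.card P : ℂ) else 0 := by
  exact (pairingChar hmul₁ d).sum_eq_ite.trans (by simp only [pairingChar_eq_zero_iff hB hmul₁ hnd])

theorem gaussSum_mul_sum_inv (hB : ∀ a b : P, B a b = q (a + b) * (q a)⁻¹ * (q b)⁻¹)
    (hmul₁ : ∀ a a' b : P, B (a + a') b = B a b * B a' b)
    (hnd : ∀ a : P, a ≠ 0 → ∃ b : P, B a b ≠ 1) :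
    (∑ a : P, (q a : ℂ)) * ∑ c : P, (q c : ℂ)⁻¹ = Fintype.card P := by
  classical
  calc (∑ a : P, (q a : ℂ)) * ∑ c : P, (q c : ℂ)⁻¹
      = ∑ c : P, ∑ d : P, (q (c + d) : ℂ) * (q c : ℂ)⁻¹ := by
        rw [sum_mul_sum, sum_comm]
        exact sum_congr rfl fun c _ =>
          (Fintype.sum_equiv (Equiv.addLeft c) _ _ fun _ => rfl).symm
    _ = ∑ d : P, (q d : ℂ) * ∑ c : P, (B c d : ℂ) := by
        simp only [mul_sum, ← coe_quadratic_mul_pairing hB]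
        exact sum_comm
    _ = Fintype.card P := by
        simp [sum_pairing hB hmul₁ hnd, quadratic_zero hB hmul₁]

end MetricGroup

theorem gauss_sum_fourier_of_quadratic_form_general
    {P : Type*} [AddCommGroup P] [Fintype P]
    (q : P → ℂˣ) (B : P → P → ℂˣ)
    (hB : ∀ a b : P, B a b = q (a + b) * (q a)⁻¹ * (q b)⁻¹)
    (hmul₁ : ∀ a a' b : P, B (a + a') b = B a b * B a' b)
    (hnd : ∀ a : P, a ≠ 0 → ∃ b : P, B a b ≠ 1) :
    ∀ b : P,
      (∑ a : P, (q a : ℂ)) * (∑ a : P, (((q a)⁻¹ * (B a b)⁻¹ : ℂˣ) : ℂ))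
        = (Fintype.card P : ℂ) * (q b : ℂ) := by
  intro b
  have shift : ∑ a : P, (q (a + b) : ℂ)⁻¹ = ∑ c : P, (q c : ℂ)⁻¹ :=
    Fintype.sum_equiv (Equiv.addRight b) _ _ fun _ => rfl
  simp only [MetricGroup.coe_inv_mul_pairing_inv hB, ← mul_sum, shift]
  rw [mul_left_comm, MetricGroup.gaussSum_mul_sum_inv hB hmul₁ hnd, mul_comm]

/-- For a finite abelian group `P` with a nondegenerate quadratic form
`q : P → ℂˣ` (in the sense of metric groups), with associated bimultiplicative pairing
`B (a,b) = q(a+b) q(a)⁻¹ q(b)⁻¹` and Gauss sum `G(P,q) = Σ_a q(a)`, one has for every `b`: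
`G(P,q) · (Σ_a q(a)⁻¹ B(a,b)⁻¹) = |P| · q(b)`. -/
theorem gauss_sum_fourier_of_quadratic_form
    {P : Type*} [AddCommGroup P] [Fintype P]
    (q : P → ℂˣ) (B : P → P → ℂˣ)
    (hB : ∀ a b : P, B a b = q (a + b) * (q a)⁻¹ * (q b)⁻¹)
    (hq : ∀ (n : ℤ) (a : P), q (n • a) = q a ^ (n ^ 2))
    (hmul₁ : ∀ a a' b : P, B (a + a') b = B a b * B a' b)
    (hmul₂ : ∀ a b b' : P, B a (b + b') = B a b * B a b')
    (hnd : ∀ a : P, a ≠ 0 → ∃ b : P, B a b ≠ 1) :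
    ∀ b : P,
      (∑ a : P, (q a : ℂ)) * (∑ a : P, (((q a)⁻¹ * (B a b)⁻¹ : ℂˣ) : ℂ))
        = (Fintype.card P : ℂ) * (q b : ℂ) :=
  gauss_sum_fourier_of_quadratic_form_general q B hB hmul₁ hnd
end

section
/- The operation * makes L a group: * is associative, 0 is a two-sided identity, and −x is a two-sided inverse of x for every x ∈ L. -/
/-- The class-2 Campbell–Hausdorff multiplication `x * y = x + y + (1/2)⁅x,y⁆`. -/
def czMul (R : Type*) [CommRing R] [Invertible (2 : R)] {L : Type*} [LieRing L]
    [LieAlgebra R L] (x y : L) : L :=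
  x + y + (⅟2 : R) • ⁅x, y⁆

/-! Since `⁅0, x⁆ = ⁅-x, x⁆ = 0`, the element `0` is an identity and `-x` an inverse of `x`.
In class 2, bracketing with `x * y` is the same as bracketing with `x + y`, so both bracketings
of `x * y * z` equal `x + y + z + ½(⁅x,y⁆ + ⁅x,z⁆ + ⁅y,z⁆)`. -/

section CzMul

variable (R : Type*) [CommRing R] [Invertible (2 : R)] {L : Type*} [LieRing L] [LieAlgebra R L]

theorem czMul_zero_left (x : L) : czMul R 0 x = x := by
  simp [czMul]

theorem czMul_zero_right (x : L) : czMul R x 0 = x := by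
  simp [czMul]

theorem czMul_neg_left_self (x : L) : czMul R (-x) x = 0 := by
  simp [czMul]

theorem czMul_neg_right_self (x : L) : czMul R x (-x) = 0 := by
  simp [czMul]

variable {R}

theorem lie_lie_right_eq_zero (hnil : ∀ x y z : L, ⁅⁅x, y⁆, z⁆ = 0) (x y z : L) :
    ⁅x, ⁅y, z⁆⁆ = 0 := by
  rw [← lie_skew, hnil, neg_zero]

theorem czMul_lie (hnil : ∀ x y z : L, ⁅⁅x, y⁆, z⁆ = 0) (x y z : L) :
    ⁅czMul R x y, z⁆ = ⁅x, z⁆ + ⁅y, z⁆ := by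
  simp [czMul, hnil]

theorem lie_czMul (hnil : ∀ x y z : L, ⁅⁅x, y⁆, z⁆ = 0) (x y z : L) :
    ⁅x, czMul R y z⁆ = ⁅x, y⁆ + ⁅x, z⁆ := by
  simp [czMul, lie_lie_right_eq_zero hnil]

theorem czMul_assoc (hnil : ∀ x y z : L, ⁅⁅x, y⁆, z⁆ = 0) (x y z : L) :
    czMul R (czMul R x y) z = czMul R x (czMul R y z) := by
  rw [czMul.eq_1 R (czMul R x y), czMul_lie hnil, czMul.eq_1 R x (czMul R y z), lie_czMul hnil, czMul, czMul]
  simp only [smul_add]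
  abel

end CzMul

/-- for a Lie algebra of nilpotency class ≤ 2 over a ring where 2 is
invertible, the operation `x * y = x + y + (1/2)⁅x,y⁆` makes `L` a group:
it is associative, `0` is a two-sided identity, and `-x` is a two-sided inverse. -/
theorem czMul_group_structure
    (R : Type*) [CommRing R] [Invertible (2 : R)] {L : Type*} [LieRing L]
    [LieAlgebra R L] (hnil : ∀ x y z : L, ⁅⁅x, y⁆, z⁆ = 0) :
    (∀ x y z : L, czMul R (czMul R x y) z = czMul R x (czMul R y z)) ∧
    (∀ x : L, czMul R 0 x = x ∧ czMul R x 0 = x) ∧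
    (∀ x : L, czMul R (-x) x = 0 ∧ czMul R x (-x) = 0) :=
  ⟨czMul_assoc hnil, fun x => ⟨czMul_zero_left R x, czMul_zero_right R x⟩,
    fun x => ⟨czMul_neg_left_self R x, czMul_neg_right_self R x⟩⟩
end

section
/- For all x, y, z ∈ L one has ⁅x,y⁆ * z = z * ⁅x,y⁆; in particular every group commutator of (L, *) is central, so the group (L, *) is nilpotent of class at most 2. (This is the class-2 instance of the claim that Exp(𝔭) lies in the category of nilpotent groups with the same nilpotence class as 𝔭.) -/
section

variable (R : Type*) [CommRing R] [Invertible (2 : R)] {L : Type*} [LieRing L]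
  [LieAlgebra R L]

theorem czMul_sub_czMul_swap (x y : L) : czMul R x y - czMul R y x = ⁅x, y⁆ := by
  have hskew : ⁅x, y⁆ - ⁅y, x⁆ = (2 : R) • ⁅x, y⁆ := by
    rw [← lie_skew y x, sub_neg_eq_add, two_smul]
  calc czMul R x y - czMul R y x = (⅟2 : R) • (⁅x, y⁆ - ⁅y, x⁆) := by
        simp only [czMul, smul_sub]; abel
    _ = ⁅x, y⁆ := by rw [hskew, smul_smul, invOf_mul_self, one_smul]

theorem czMul_comm_iff_lie_eq_zero (x y : L) : czMul R x y = czMul R y x ↔ ⁅x, y⁆ = 0 := by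
  rw [← czMul_sub_czMul_swap R, sub_eq_zero]

end

/-- every Lie bracket `⁅x,y⁆` is central for the class-2
Campbell–Hausdorff multiplication: `⁅x,y⁆ * z = z * ⁅x,y⁆` for all `x y z`. -/
theorem czMul_bracket_central
    (R : Type*) [CommRing R] [Invertible (2 : R)] {L : Type*} [LieRing L]
    [LieAlgebra R L] (hnil : ∀ x y z : L, ⁅⁅x, y⁆, z⁆ = 0) :
    ∀ x y z : L, czMul R ⁅x, y⁆ z = czMul R z ⁅x, y⁆ := fun x y z =>
  (czMul_comm_iff_lie_eq_zero R ⁅x, y⁆ z).mpr (hnil x y z)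
end

section
/- Let A and B be Lie subrings of L such that A, as a subspace of L, is connected. Then the additive subgroup of L generated by all brackets ⁅a,b⁆ with a ∈ A and b ∈ B is a connected subspace of L. (This is the topological content of Lemma 'commutator' of the paper: if 𝔞, 𝔟 are Lie subrings of 𝔤 with 𝔞 connected, then [𝔞,𝔟] is connected.) -/
/-!
The bracket set `S = {⁅a, b⁆ | a ∈ A, b ∈ B}` is the union of the connected sets `⁅A, b⁆`,
which all contain `0`. Since `S = -S`, the subgroup it generates is the union of the sumsets
`n • S`; each is a continuous image of a power of `S`, and they all contain `0`.
-/

open Pointwise Set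

theorem AddSubmonoid.coe_closure_eq_iUnion_nsmul {M : Type*} [AddMonoid M] (s : Set M) :
    (AddSubmonoid.closure s : Set M) = ⋃ n : ℕ, n • s := by
  refine subset_antisymm (fun x hx => ?_) (iUnion_subset fun n => ?_)
  · induction hx using AddSubmonoid.closure_induction with
    | mem x hx => exact mem_iUnion.2 ⟨1, by rwa [one_nsmul]⟩
    | zero => exact mem_iUnion.2 ⟨0, by rw [zero_nsmul]; rfl⟩
    | add x y _ _ hx hy =>
      obtain ⟨m, hm⟩ := mem_iUnion.1 hx
      obtain ⟨n, hn⟩ := mem_iUnion.1 hy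
      exact mem_iUnion.2 ⟨m + n, by rw [add_nsmul]; exact add_mem_add hm hn⟩
  · exact AddSubmonoid.subset_closure.trans (AddSubmonoid.closure_nsmul_le (s := s))

theorem AddSubgroup.coe_closure_eq_of_neg_subset {G : Type*} [AddGroup G] {s : Set G}
    (hs : -s ⊆ s) : (AddSubgroup.closure s : Set G) = AddSubmonoid.closure s := by
  rw [← AddSubgroup.coe_toAddSubmonoid, AddSubgroup.closure_toAddSubmonoid, union_eq_left.2 hs]

section ContinuousAdd

variable {M : Type*} [TopologicalSpace M] [Add M] [ContinuousAdd M]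

theorem IsPreconnected.add {s t : Set M} (hs : IsPreconnected s) (ht : IsPreconnected t) :
    IsPreconnected (s + t) := by
  rw [← image2_add, ← image_prod]
  exact (hs.prod ht).image _ continuous_add.continuousOn

end ContinuousAdd

section ContinuousAddMonoid

variable {M : Type*} [TopologicalSpace M] [AddMonoid M] [ContinuousAdd M]

theorem IsPreconnected.nsmul {s : Set M} (hs : IsPreconnected s) (n : ℕ) :
    IsPreconnected (n • s) := by
  induction n with
  | zero => rw [zero_nsmul]; exact isPreconnected_singleton
  | succ n ih => rw [succ_nsmul]; exact ih.add hs

theorem IsConnected.addSubmonoidClosure {s : Set M} (hs : IsConnected s) (h0 : (0 : M) ∈ s) :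
    IsConnected (AddSubmonoid.closure s : Set M) := by
  refine ⟨⟨0, AddSubmonoid.zero_mem _⟩, ?_⟩
  rw [AddSubmonoid.coe_closure_eq_iUnion_nsmul]
  exact isPreconnected_iUnion ⟨0, mem_iInter.2 fun n => zero_mem_nsmul h0⟩
    fun n => hs.isPreconnected.nsmul n

end ContinuousAddMonoid

theorem IsConnected.addSubgroupClosure {G : Type*} [TopologicalSpace G] [AddGroup G]
    [ContinuousAdd G] {s : Set G} (hs : IsConnected s) (h0 : (0 : G) ∈ s) (hneg : -s ⊆ s) :
    IsConnected (AddSubgroup.closure s : Set G) := by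
  rw [AddSubgroup.coe_closure_eq_of_neg_subset hneg]
  exact hs.addSubmonoidClosure h0

section LieRing

variable {L : Type*} [LieRing L]

theorem zero_mem_image2_lie {A B : AddSubgroup L} :
    (0 : L) ∈ image2 (fun a b => ⁅a, b⁆) (A : Set L) (B : Set L) :=
  ⟨0, A.zero_mem, 0, B.zero_mem, zero_lie 0⟩

theorem neg_image2_lie_subset {A B : AddSubgroup L} :
    -image2 (fun a b => ⁅a, b⁆) (A : Set L) (B : Set L) ⊆
      image2 (fun a b => ⁅a, b⁆) (A : Set L) (B : Set L) := by
  rintro x ⟨a, ha, b, hb, hab⟩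
  exact ⟨-a, A.neg_mem ha, b, hb, by simp only [neg_lie, hab, neg_neg]⟩

theorem IsConnected.image2_lie [TopologicalSpace L]
    (hbr : ∀ b : L, Continuous fun a : L => ⁅a, b⁆)
    {A B : Set L} (hA : IsConnected A) (h0 : (0 : L) ∈ A) (hB : B.Nonempty) :
    IsConnected (image2 (fun a b => ⁅a, b⁆) A B) := by
  refine ⟨hA.nonempty.image2 hB, isPreconnected_of_forall 0 ?_⟩
  rintro _ ⟨a, ha, b, hb, rfl⟩
  exact ⟨(⁅·, b⁆) '' A, image_subset_image2_left hb, ⟨0, h0, zero_lie b⟩,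
    mem_image_of_mem _ ha, (hA.image _ (hbr b).continuousOn).isPreconnected⟩

end LieRing

theorem commutator_subring_connected_general
    {L : Type*} [LieRing L] [TopologicalSpace L]
    (hadd : Continuous fun p : L × L => p.1 + p.2)
    (hbr : Continuous fun p : L × L => ⁅p.1, p.2⁆)
    (A B : AddSubgroup L)
    (hAconn : IsConnected (A : Set L)) :
    IsConnected
      ((AddSubgroup.closure {z : L | ∃ a ∈ A, ∃ b ∈ B, z = ⁅a, b⁆} : AddSubgroup L) :
        Set L) := by
  have : ContinuousAdd L := ⟨hadd⟩
  have hS : {z : L | ∃ a ∈ A, ∃ b ∈ B, z = ⁅a, b⁆} =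
      image2 (fun a b => ⁅a, b⁆) (A : Set L) (B : Set L) := by
    ext
    simp only [mem_ofPred_eq, mem_image2, SetLike.mem_coe, eq_comm]
  have hS_conn := hAconn.image2_lie (fun b => hbr.comp (continuous_id.prodMk continuous_const))
    A.zero_mem ⟨0, B.zero_mem⟩
  rw [hS]
  exact hS_conn.addSubgroupClosure zero_mem_image2_lie neg_image2_lie_subset

/-- let `L` be a topological Lie ring (addition, negation and the Lie
bracket are continuous) and let `A`, `B` be Lie subrings of `L` (additive subgroups
closed under the bracket) with `A` connected as a subspace. Then the additive subgroup
generated by all brackets `⁅a,b⁆` with `a ∈ A`, `b ∈ B` is connected as a subspace. -/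
theorem commutator_subring_connected
    {L : Type*} [LieRing L] [TopologicalSpace L]
    (hadd : Continuous fun p : L × L => p.1 + p.2)
    (hneg : Continuous fun x : L => -x)
    (hbr : Continuous fun p : L × L => ⁅p.1, p.2⁆)
    (A B : AddSubgroup L)
    (hA : ∀ x ∈ A, ∀ y ∈ A, ⁅x, y⁆ ∈ A)
    (hB : ∀ x ∈ B, ∀ y ∈ B, ⁅x, y⁆ ∈ B)
    (hAconn : IsConnected (A : Set L)) :
    IsConnected
      ((AddSubgroup.closure {z : L | ∃ a ∈ A, ∃ b ∈ B, z = ⁅a, b⁆} : AddSubgroup L) :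
        Set L) :=
  commutator_subring_connected_general hadd hbr A B hAconn
end
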